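/- Let n = 8, ζ = exp(2πi/8), q = 1 + ζ + ζ² + ζ³, and I = qR. Then: (i) card(R/I) = 8; (ii) every ideal J of R with card(R/J) = 8 equals I; (iii) conj(q) ∈ I, so the colouring induced by I is perfect; (iv) 2 ∈ I; (v) 1 − ζ² ∉ I; (vi) ζ + ζ³ ∉ I. Consequently, an isometry g of the complex plane with g(R) = R satisfies g(x) − x ∈ I for all x ∈ R if and only if there exists t ∈ I with g(z) = z + t for all z or g(z) = −z + t for all z (K = T_{(q)} ⋊ C₂). -/

import Mathlib

open Complex

/-- The primitive `n`-th root of unity `ζ = exp(2πi/n)`. -/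
noncomputable def zeta (n : ℕ) : ℂ := Complex.exp (2 * Real.pi * Complex.I / n)

/-- The ring of cyclotomic integers `M_n = ℤ[ζ_n]`, as a subring of `ℂ`. -/
noncomputable def Rn (n : ℕ) : Subring ℂ := Subring.closure {zeta n}

/-- `ζ_n` as an element of `M_n`. -/
noncomputable def zetaR (n : ℕ) : ↥(Rn n) := ⟨zeta n, Subring.subset_closure rfl⟩

/-- `z ∈ ℂ` lies in the ideal `I` of `Rn n` (viewed inside `ℂ`). -/
def InIdeal (n : ℕ) (I : Ideal ↥(Rn n)) (z : ℂ) : Prop :=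
  ∃ w : ↥(Rn n), w ∈ I ∧ (w : ℂ) = z

/-- An isometry of the complex plane: `z ↦ a z + b` or `z ↦ a conj z + b` with `|a| = 1`. -/
def IsIsometry (g : ℂ → ℂ) : Prop :=
  ∃ a b : ℂ, ‖a‖ = 1 ∧
    ((∀ z, g z = a * z + b) ∨ (∀ z, g z = a * (starRingEnd ℂ) z + b))

/-- An orientation-preserving isometry of the complex plane: `z ↦ a z + b` with `|a| = 1`. -/
def IsOPIsometry (g : ℂ → ℂ) : Prop :=
  ∃ a b : ℂ, ‖a‖ = 1 ∧ ∀ z, g z = a * z + b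

/-- `g` is a colour symmetry of the colouring of `Rn n` induced by the ideal `I`. -/
def IsColourSym (n : ℕ) (I : Ideal ↥(Rn n)) (g : ℂ → ℂ) : Prop :=
  ∀ x y : ℂ, x ∈ Rn n → y ∈ Rn n → (InIdeal n I (x - y) ↔ InIdeal n I (g x - g y))

/-- The colouring induced by `I` is perfect. -/
def IsPerfectColouring (n : ℕ) (I : Ideal ↥(Rn n)) : Prop :=
  ∀ g : ℂ → ℂ, IsIsometry g → g '' (Rn n : Set ℂ) = (Rn n : Set ℂ) → IsColourSym n I g

/-- The colouring induced by `I` is chirally perfect. -/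
def IsChirallyPerfectColouring (n : ℕ) (I : Ideal ↥(Rn n)) : Prop :=
  ∀ g : ℂ → ℂ, IsOPIsometry g → g '' (Rn n : Set ℂ) = (Rn n : Set ℂ) → IsColourSym n I g

/-!
Write `ζ = ζ₈`, `q = 1 + ζ + ζ² + ζ³` and `π = 1 - ζ`. The real and imaginary parts of
`a + bζ + cζ² + dζ³` are `a + (b - d)/√2` and `c + (b + d)/√2`, so by the irrationality of `√2`
the powers `1, ζ, ζ², ζ³` form a `ℤ`-basis of `R`. Since `π q = 1 - ζ⁴ = 2`, the ideal `qR`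
consists exactly of the elements whose four coordinates have the same parity; this gives
`card (R/qR) = 8`, `2 ∈ qR`, `conj q = 2 - q ∈ qR` and (v), (vi).

For uniqueness, `q` is a unit times `π³` and `π⁴` is a unit times `2`, so `π` is nilpotent
modulo any ideal `J` of index `8`. In a finite ring the ideals `(πᵏ)` of a nilpotent `π` strictly
decrease until they vanish, each of index at least `2` in the previous one; so `π³ = 0` in `R/J`,
hence `qR ≤ J`, and equal indices force `J = qR`.

An isometry preserving `R` is `z ↦ a z + b` or `z ↦ a conj z + b` with `a, b ∈ R`, `|a| = 1`;
as `conj` preserves `R` and `qR`, it preserves the colouring. It fixes every colour only if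
`b ∈ qR` and `a - 1 ∈ qR`; since `|a| = 1` forces the squares of the coordinates of `a` to sum
to `1`, this means `a = ±1`. A reflection would also need `∓ζ³ - ζ ∈ qR`, which fails.
-/

lemma zeta_mem_Rn (n : ℕ) : zeta n ∈ Rn n := Subring.subset_closure rfl

@[simp]
lemma coe_zetaR (n : ℕ) : ((zetaR n : ↥(Rn n)) : ℂ) = zeta n := rfl

lemma conj_zeta (n : ℕ) : starRingEnd ℂ (zeta n) = (zeta n)⁻¹ := by
  rw [zeta, ← Complex.exp_conj, ← Complex.exp_neg]
  congr 1
  simp only [map_div₀, map_mul, map_ofNat, Complex.conj_ofReal, Complex.conj_I, map_natCast]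
  ring

lemma inv_zeta_mem_Rn (n : ℕ) : (zeta n)⁻¹ ∈ Rn n := by
  rcases eq_or_ne n 0 with rfl | hn
  · simp [zeta, one_mem]
  · have hζ : zeta n ^ n = 1 := (Complex.isPrimitiveRoot_exp n hn).pow_eq_one
    have : (zeta n)⁻¹ = zeta n ^ (n - 1) := by
      refine inv_eq_of_mul_eq_one_left ?_
      rw [← pow_succ, Nat.sub_add_cancel (Nat.one_le_iff_ne_zero.mpr hn), hζ]
    rw [this]
    exact pow_mem (zeta_mem_Rn n) _

lemma conj_mem_Rn {n : ℕ} {z : ℂ} (hz : z ∈ Rn n) : starRingEnd ℂ z ∈ Rn n := by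
  have : Rn n ≤ (Rn n).comap (starRingEnd ℂ) := by
    rw [Rn, Subring.closure_le, Set.singleton_subset_iff, SetLike.mem_coe, Subring.mem_comap,
      conj_zeta]
    exact inv_zeta_mem_Rn n
  exact this hz

section InIdeal

variable {n : ℕ} {I : Ideal ↥(Rn n)}

lemma inIdeal_coe_iff {w : ↥(Rn n)} : InIdeal n I w ↔ w ∈ I :=
  ⟨fun ⟨_, hv, hvw⟩ => Subtype.ext hvw ▸ hv, fun hw => ⟨w, hw, rfl⟩⟩

lemma InIdeal.sub {z z' : ℂ} (h : InIdeal n I z) (h' : InIdeal n I z') :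
    InIdeal n I (z - z') := by
  obtain ⟨w, hw, rfl⟩ := h
  obtain ⟨w', hw', rfl⟩ := h'
  exact ⟨w - w', I.sub_mem hw hw', rfl⟩

lemma InIdeal.mul_left {a z : ℂ} (ha : a ∈ Rn n) (h : InIdeal n I z) :
    InIdeal n I (a * z) := by
  obtain ⟨w, hw, rfl⟩ := h
  exact ⟨⟨a, ha⟩ * w, I.mul_mem_left _ hw, rfl⟩

lemma inIdeal_mul_left_iff {a z : ℂ} (ha : a ∈ Rn n) (habs : ‖a‖ = 1) :
    InIdeal n I (a * z) ↔ InIdeal n I z := by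
  refine ⟨fun h => ?_, InIdeal.mul_left ha⟩
  have hconj : starRingEnd ℂ a * a = 1 := by
    rw [mul_comm, Complex.mul_conj, Complex.normSq_eq_norm_sq, habs]
    norm_num
  simpa [← mul_assoc, hconj] using h.mul_left (conj_mem_Rn ha)

lemma inIdeal_conj_iff (hI : ∀ w ∈ I, InIdeal n I (starRingEnd ℂ w)) {z : ℂ} :
    InIdeal n I (starRingEnd ℂ z) ↔ InIdeal n I z := by
  have hconj : ∀ {z}, InIdeal n I z → InIdeal n I (starRingEnd ℂ z) := by
    rintro _ ⟨w, hw, rfl⟩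
    exact hI w hw
  exact ⟨fun h => by simpa using hconj h, hconj⟩

lemma conj_inIdeal_of_span_singleton {q : ↥(Rn n)}
    (hq : InIdeal n (Ideal.span {q}) (starRingEnd ℂ q)) :
    ∀ w ∈ Ideal.span {q}, InIdeal n (Ideal.span {q}) (starRingEnd ℂ w) := by
  intro w hw
  obtain ⟨r, rfl⟩ := Ideal.mem_span_singleton'.mp hw
  simpa using hq.mul_left (conj_mem_Rn r.2)

end InIdeal

lemma IsIsometry.exists_coeffs_mem {n : ℕ} {g : ℂ → ℂ} (hg : IsIsometry g)
    (hR : g '' (Rn n : Set ℂ) = Rn n) :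
    ∃ a b : ℂ, a ∈ Rn n ∧ b ∈ Rn n ∧ ‖a‖ = 1 ∧
      ((∀ z, g z = a * z + b) ∨ (∀ z, g z = a * starRingEnd ℂ z + b)) := by
  obtain ⟨a, b, habs, hform⟩ := hg
  have h0 : g 0 = b := by rcases hform with h | h <;> simp [h]
  have h1 : g 1 = a + b := by rcases hform with h | h <;> simp [h]
  have hmaps : Set.MapsTo g (Rn n) (Rn n) := by simpa only [hR] using Set.mapsTo_image g (Rn n)
  have hb : b ∈ Rn n := h0 ▸ hmaps (zero_mem _)
  have ha : a ∈ Rn n := by simpa [h1] using sub_mem (hmaps (one_mem (Rn n))) hb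
  exact ⟨a, b, ha, hb, habs, hform⟩

lemma isPerfectColouring_of_conj {n : ℕ} {I : Ideal ↥(Rn n)}
    (hI : ∀ w ∈ I, InIdeal n I (starRingEnd ℂ w)) : IsPerfectColouring n I := by
  intro g hg hgR x y _ _
  obtain ⟨a, b, ha, -, habs, hform | hform⟩ := hg.exists_coeffs_mem hgR
  · rw [hform, hform, show a * x + b - (a * y + b) = a * (x - y) by ring,
      inIdeal_mul_left_iff ha habs]
  · rw [hform, hform, show a * starRingEnd ℂ x + b - (a * starRingEnd ℂ y + b)
        = a * starRingEnd ℂ (x - y) by rw [map_sub]; ring,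
      inIdeal_mul_left_iff ha habs, inIdeal_conj_iff hI]

local notation "ζ" => zetaR 8

lemma zeta_eight_sq : zeta 8 ^ 2 = Complex.I := by
  rw [zeta, ← Complex.exp_nat_mul]
  convert Complex.exp_pi_div_two_mul_I using 2
  push_cast
  ring

lemma zeta_eight_pow_four : zeta 8 ^ 4 = -1 := by
  rw [show zeta 8 ^ 4 = (zeta 8 ^ 2) ^ 2 by ring, zeta_eight_sq, Complex.I_sq]

lemma zetaR_pow_four : ζ ^ 4 = -1 := Subtype.ext (by push_cast; exact zeta_eight_pow_four)

lemma conj_zeta_eight : starRingEnd ℂ (zeta 8) = -zeta 8 ^ 3 := by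
  rw [conj_zeta]
  refine inv_eq_of_mul_eq_one_left ?_
  linear_combination -zeta_eight_pow_four

lemma zeta_eight_eq : zeta 8 = (√2 / 2 : ℝ) + (√2 / 2 : ℝ) * Complex.I := by
  have h : 2 * Real.pi / 8 = Real.pi / 4 := by ring
  apply Complex.ext <;> norm_num [zeta, Complex.exp_re, Complex.exp_im, h]

lemma int_eq_zero_of_add_sqrt_two_mul_eq_zero {m k : ℤ} (h : m + √2 * k = 0) :
    m = 0 ∧ k = 0 := by
  obtain rfl | hk := eq_or_ne k 0
  · exact ⟨by simpa using h, rfl⟩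
  · have hirr : Irrational (m + k * √2) := (irrational_sqrt_two.intCast_mul hk).intCast_add m
    exact absurd (by push_cast; linarith) (hirr.ne_int 0)

noncomputable def ofCoords (a b c d : ℤ) : ↥(Rn 8) := a + b * ζ + c * ζ ^ 2 + d * ζ ^ 3

lemma coe_ofCoords (a b c d : ℤ) :
    (ofCoords a b c d : ℂ) = ⟨a + √2 / 2 * (b - d), c + √2 / 2 * (b + d)⟩ := by
  rw [Complex.mk_eq_add_mul_I]
  have h3 : zeta 8 ^ 3 = zeta 8 * Complex.I := by rw [pow_succ', zeta_eight_sq]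
  simp only [ofCoords, Subring.coe_add, Subring.coe_mul, Subring.coe_pow, SubringClass.coe_intCast]
  rw [coe_zetaR, h3, zeta_eight_sq, zeta_eight_eq]
  push_cast
  linear_combination ((d : ℂ) * √2 / 2) * Complex.I_sq

lemma ofCoords_sub (a b c d a' b' c' d' : ℤ) :
    ofCoords a b c d - ofCoords a' b' c' d' = ofCoords (a - a') (b - b') (c - c') (d - d') := by
  simp only [ofCoords]
  push_cast
  ring

lemma ofCoords_mul (a b c d e f g h : ℤ) :
    ofCoords a b c d * ofCoords e f g h
      = ofCoords (a * e - b * h - c * g - d * f) (a * f + b * e - c * h - d * g)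
          (a * g + b * f + c * e - d * h) (a * h + b * g + c * f + d * e) := by
  simp only [ofCoords]
  push_cast
  linear_combination ((b : ↥(Rn 8)) * h + c * g + d * f + (c * h + d * g) * ζ + d * h * ζ ^ 2)
    * zetaR_pow_four

lemma ofCoords_eq_zero {a b c d : ℤ} (h : ofCoords a b c d = 0) :
    a = 0 ∧ b = 0 ∧ c = 0 ∧ d = 0 := by
  have hC : (ofCoords a b c d : ℂ) = 0 := by rw [h]; rfl
  simp only [coe_ofCoords, Complex.ext_iff, Complex.zero_re, Complex.zero_im] at hC
  have e1 := int_eq_zero_of_add_sqrt_two_mul_eq_zero (m := 2 * a) (k := b - d)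
    (by push_cast; linarith [hC.1])
  have e2 := int_eq_zero_of_add_sqrt_two_mul_eq_zero (m := 2 * c) (k := b + d)
    (by push_cast; linarith [hC.2])
  omega

lemma ofCoords_inj {a b c d a' b' c' d' : ℤ} :
    ofCoords a b c d = ofCoords a' b' c' d' ↔ a = a' ∧ b = b' ∧ c = c' ∧ d = d' := by
  refine ⟨fun h => ?_, by rintro ⟨rfl, rfl, rfl, rfl⟩; rfl⟩
  have := ofCoords_eq_zero (a := a - a') (b := b - b') (c := c - c') (d := d - d')
    (by rw [← ofCoords_sub, h, sub_self])
  omega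

lemma exists_ofCoords (r : ↥(Rn 8)) : ∃ a b c d : ℤ, ofCoords a b c d = r := by
  suffices ∀ z ∈ Rn 8, ∃ a b c d : ℤ, (ofCoords a b c d : ℂ) = z by
    obtain ⟨a, b, c, d, h⟩ := this r r.2
    exact ⟨a, b, c, d, Subtype.ext h⟩
  intro z hz
  induction hz using Subring.closure_induction with
  | mem x hx =>
    obtain rfl := Set.mem_singleton_iff.mp hx
    exact ⟨0, 1, 0, 0, by simp [ofCoords]⟩
  | zero => exact ⟨0, 0, 0, 0, by simp [ofCoords]⟩
  | one => exact ⟨1, 0, 0, 0, by simp [ofCoords]⟩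
  | add x y _ _ hx hy =>
    obtain ⟨a, b, c, d, rfl⟩ := hx
    obtain ⟨e, f, g, h, rfl⟩ := hy
    exact ⟨a + e, b + f, c + g, d + h, by simp only [ofCoords]; push_cast [coe_zetaR]; ring⟩
  | neg x _ hx =>
    obtain ⟨a, b, c, d, rfl⟩ := hx
    exact ⟨-a, -b, -c, -d, by simp only [ofCoords]; push_cast [coe_zetaR]; ring⟩
  | mul x y _ _ hx hy =>
    obtain ⟨a, b, c, d, rfl⟩ := hx
    obtain ⟨e, f, g, h, rfl⟩ := hy
    exact ⟨_, _, _, _, by rw [← Subring.coe_mul, ofCoords_mul]⟩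

lemma sq_add_sq_add_sq_add_sq_eq_one_of_norm_ofCoords {a b c d : ℤ}
    (h : ‖(ofCoords a b c d : ℂ)‖ = 1) :
    a ^ 2 + b ^ 2 + c ^ 2 + d ^ 2 = 1 := by
  have hs : √2 ^ 2 = 2 := Real.sq_sqrt (by norm_num)
  have hnormSq := Complex.sq_norm (ofCoords a b c d)
  rw [h, coe_ofCoords, Complex.normSq_mk] at hnormSq
  have := int_eq_zero_of_add_sqrt_two_mul_eq_zero (m := a ^ 2 + b ^ 2 + c ^ 2 + d ^ 2 - 1)
    (k := a * b - a * d + c * b + c * d)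
    (by push_cast; linear_combination -hnormSq - ((b : ℝ) ^ 2 + d ^ 2) / 2 * hs)
  omega

local notation "q₈" => 1 + ζ + ζ ^ 2 + ζ ^ 3
local notation "I₈" => Ideal.span {q₈}

lemma q_eq_ofCoords : q₈ = ofCoords 1 1 1 1 := by simp [ofCoords]

lemma two_eq_mul_q : (2 : ↥(Rn 8)) = (1 - ζ) * q₈ := by
  linear_combination zetaR_pow_four

lemma two_mem_span_q : (2 : ↥(Rn 8)) ∈ I₈ :=
  Ideal.mem_span_singleton'.mpr ⟨1 - ζ, two_eq_mul_q.symm⟩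

lemma ofCoords_mem_span_q_iff {a b c d : ℤ} :
    ofCoords a b c d ∈ I₈ ↔ 2 ∣ b - a ∧ 2 ∣ c - b ∧ 2 ∣ d - c := by
  constructor
  · intro h
    obtain ⟨r, hr⟩ := Ideal.mem_span_singleton'.mp h
    obtain ⟨e, f, g, h, rfl⟩ := exists_ofCoords r
    rw [q_eq_ofCoords, ofCoords_mul, ofCoords_inj] at hr
    omega
  · rintro ⟨⟨k₁, hk₁⟩, ⟨k₂, hk₂⟩, ⟨k₃, hk₃⟩⟩
    have hsplit : ofCoords a b c d = a * q₈ + 2 * ofCoords 0 k₁ (k₁ + k₂) (k₁ + k₂ + k₃) := by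
      rw [show b = a + 2 * k₁ by omega, show c = a + 2 * k₁ + 2 * k₂ by omega,
        show d = a + 2 * k₁ + 2 * k₂ + 2 * k₃ by omega]
      simp only [ofCoords]
      push_cast
      ring
    rw [hsplit]
    exact add_mem (Ideal.mul_mem_left _ _ (Ideal.mem_span_singleton_self _))
      (Ideal.mul_mem_right _ _ two_mem_span_q)

lemma conj_q_inIdeal : InIdeal 8 I₈ (starRingEnd ℂ q₈) := by
  have hconj : starRingEnd ℂ q₈ = ((2 - q₈ : ↥(Rn 8)) : ℂ) := by
    push_cast
    simp only [map_add, map_pow, map_one]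
    rw [coe_zetaR, show ((2 : ↥(Rn 8)) : ℂ) = 2 by norm_cast, conj_zeta_eight]
    linear_combination (zeta 8 ^ 2 - zeta 8 ^ 5 + zeta 8) * zeta_eight_pow_four
  rw [hconj, inIdeal_coe_iff]
  exact sub_mem two_mem_span_q (Ideal.mem_span_singleton_self _)

lemma one_sub_zeta_sq_not_mem_span_q : 1 - ζ ^ 2 ∉ I₈ := by
  rw [show 1 - ζ ^ 2 = ofCoords 1 0 (-1) 0 by simp only [ofCoords]; push_cast; ring,
    ofCoords_mem_span_q_iff]
  decide

lemma zeta_add_zeta_cube_not_mem_span_q : ζ + ζ ^ 3 ∉ I₈ := by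
  rw [show ζ + ζ ^ 3 = ofCoords 0 1 0 1 by simp [ofCoords], ofCoords_mem_span_q_iff]
  decide

lemma mk_ofCoords_eq_mk_ofCoords_iff {a b c d a' b' c' d' : ℤ} :
    Ideal.Quotient.mk I₈ (ofCoords a b c d) = Ideal.Quotient.mk I₈ (ofCoords a' b' c' d') ↔
      2 ∣ (b - b') - (a - a') ∧ 2 ∣ (c - c') - (b - b') ∧ 2 ∣ (d - d') - (c - c') := by
  rw [Ideal.Quotient.mk_eq_mk_iff_sub_mem, ofCoords_sub, ofCoords_mem_span_q_iff]

lemma card_quotient_span_q : Nat.card (↥(Rn 8) ⧸ I₈) = 8 := by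
  -- the classes of `a + b ζ + c ζ²` with `a, b, c ∈ {0, 1}` are pairwise distinct and exhaust
  -- `R ⧸ I₈`, since subtracting `d q` and even multiples clears the other coordinates
  let χ : ZMod 2 × ZMod 2 × ZMod 2 → ↥(Rn 8) ⧸ I₈ := fun p =>
    Ideal.Quotient.mk I₈ (ofCoords p.1.val p.2.1.val p.2.2.val 0)
  have hinj : Function.Injective χ := by
    rintro ⟨x, y, z⟩ ⟨x', y', z'⟩ h
    simp only [χ, mk_ofCoords_eq_mk_ofCoords_iff] at h
    have := x.val_lt; have := y.val_lt; have := z.val_lt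
    have := x'.val_lt; have := y'.val_lt; have := z'.val_lt
    obtain rfl : x = x' := ZMod.val_injective _ (by omega)
    obtain rfl : y = y' := ZMod.val_injective _ (by omega)
    obtain rfl : z = z' := ZMod.val_injective _ (by omega)
    rfl
  have hsurj : Function.Surjective χ := by
    intro w
    obtain ⟨r, rfl⟩ := Ideal.Quotient.mk_surjective w
    obtain ⟨a, b, c, d, rfl⟩ := exists_ofCoords r
    refine ⟨((a - d : ℤ), (b - d : ℤ), (c - d : ℤ)), ?_⟩
    simp only [χ, mk_ofCoords_eq_mk_ofCoords_iff, ZMod.val_intCast]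
    omega
  rw [← Nat.card_eq_of_bijective χ ⟨hinj, hsurj⟩]
  simp

section FiniteRing

variable {A : Type*} [CommRing A] [Finite A]

lemma two_mul_card_span_pow_succ_le {π : A} (hπ : IsNilpotent π) {k : ℕ} (hk : π ^ k ≠ 0) :
    2 * Nat.card (Ideal.span {π ^ (k + 1)}) ≤ Nat.card (Ideal.span {π ^ k}) := by
  have hle : Ideal.span {π ^ (k + 1)} ≤ Ideal.span {π ^ k} :=
    Ideal.span_singleton_le_span_singleton.mpr (pow_dvd_pow π k.le_succ)
  have hne : Ideal.span {π ^ (k + 1)} ≠ Ideal.span {π ^ k} := by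
    intro heq
    obtain ⟨c, hc⟩ := Ideal.mem_span_singleton'.mp (heq ▸ Ideal.mem_span_singleton_self (π ^ k))
    have hunit : IsUnit (1 - π * c) := ((Commute.all π c).isNilpotent_mul_right hπ).isUnit_one_sub
    exact hk (hunit.mul_left_eq_zero.mp (by linear_combination -hc))
  obtain ⟨m, hm⟩ := AddSubgroup.card_dvd_of_le (Submodule.toAddSubgroup_mono hle)
  have hpos : 0 < Nat.card (Ideal.span {π ^ (k + 1)}) := Nat.card_pos
  have hm1 : m ≠ 1 := by
    rintro rfl
    exact hne (Submodule.toAddSubgroup_injective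
      (AddSubgroup.eq_of_le_of_card_ge (Submodule.toAddSubgroup_mono hle) (by omega)))
  change Nat.card (Ideal.span {π ^ k}) = Nat.card (Ideal.span {π ^ (k + 1)}) * m at hm
  have hm0 : m ≠ 0 := by
    rintro rfl
    exact (Nat.card_pos (α := Ideal.span {π ^ k})).ne' (by simpa using hm)
  rw [hm]
  nlinarith [show 2 ≤ m by omega]

lemma two_pow_mul_card_span_pow_le {π : A} (hπ : IsNilpotent π) {k : ℕ} (hk : π ^ k ≠ 0) :
    2 ^ k * Nat.card (Ideal.span {π ^ k}) ≤ Nat.card A := by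
  induction k with
  | zero => simp
  | succ k ih =>
    have hk' : π ^ k ≠ 0 := fun h => hk (by rw [pow_succ, h, zero_mul])
    calc 2 ^ (k + 1) * Nat.card (Ideal.span {π ^ (k + 1)})
        = 2 ^ k * (2 * Nat.card (Ideal.span {π ^ (k + 1)})) := by ring
      _ ≤ 2 ^ k * Nat.card (Ideal.span {π ^ k}) :=
          Nat.mul_le_mul_left _ (two_mul_card_span_pow_succ_le hπ hk')
      _ ≤ Nat.card A := ih hk'

lemma pow_eq_zero_of_card_lt_two_pow {π : A} (hπ : IsNilpotent π) {k : ℕ}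
    (hcard : Nat.card A < 2 ^ (k + 1)) : π ^ k = 0 := by
  by_contra hk
  have h1 : 1 < Nat.card (Ideal.span {π ^ k}) := by
    rw [Finite.one_lt_card_iff_nontrivial]
    exact ⟨⟨⟨π ^ k, Ideal.mem_span_singleton_self _⟩, 0, fun h => hk (congrArg Subtype.val h)⟩⟩
  have := two_pow_mul_card_span_pow_le hπ hk
  rw [pow_succ] at hcard
  nlinarith

end FiniteRing

lemma Ideal.eq_of_le_of_card_quotient_eq {A : Type*} [CommRing A] {I J : Ideal A}
    [Finite (A ⧸ I)] (hle : I ≤ J) (hcard : Nat.card (A ⧸ J) = Nat.card (A ⧸ I)) : I = J := by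
  have hinj : Function.Injective (Ideal.Quotient.factor hle) :=
    ((Ideal.Quotient.factor_surjective hle).bijective_of_nat_card_le hcard.ge).1
  refine le_antisymm hle fun x hx => ?_
  rw [← Ideal.Quotient.eq_zero_iff_mem] at hx ⊢
  exact hinj (by rwa [Ideal.Quotient.factor_mk, map_zero])

lemma one_sub_zeta_pow_four : (1 - ζ) ^ 4 = 2 * ofCoords 0 (-2) 3 (-2) := by
  simp only [ofCoords]
  push_cast
  linear_combination zetaR_pow_four

lemma q_eq_mul_one_sub_zeta_pow_three : q₈ = ofCoords 0 (-2) (-3) (-2) * (1 - ζ) ^ 3 := by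
  simp only [ofCoords]
  push_cast
  linear_combination (1 + 3 * ζ - 2 * ζ ^ 2) * zetaR_pow_four

lemma eq_span_q_of_card_quotient {J : Ideal ↥(Rn 8)} (hJ : Nat.card (↥(Rn 8) ⧸ J) = 8) :
    J = I₈ := by
  have : Finite (↥(Rn 8) ⧸ J) := Nat.finite_of_card_ne_zero (by omega)
  have : Finite (↥(Rn 8) ⧸ I₈) :=
    Nat.finite_of_card_ne_zero (by rw [card_quotient_span_q]; omega)
  let π := Ideal.Quotient.mk J (1 - ζ)
  have h8 : (8 : ↥(Rn 8) ⧸ J) = 0 := by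
    simpa [hJ] using card_nsmul_eq_zero' (G := ↥(Rn 8) ⧸ J) (x := 1)
  have hnil : IsNilpotent π := ⟨4 * 3, by
    rw [pow_mul, ← map_pow, one_sub_zeta_pow_four, map_mul, mul_pow, map_ofNat,
      show (2 : ↥(Rn 8) ⧸ J) ^ 3 = 8 by norm_num, h8, zero_mul]⟩
  have hπ3 : (1 - ζ) ^ 3 ∈ J := by
    rw [← Ideal.Quotient.eq_zero_iff_mem, map_pow]
    exact pow_eq_zero_of_card_lt_two_pow hnil (by rw [hJ]; norm_num)
  have hq : q₈ ∈ J := q_eq_mul_one_sub_zeta_pow_three ▸ J.mul_mem_left _ hπ3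
  exact (Ideal.eq_of_le_of_card_quotient_eq (Ideal.span_singleton_le_iff_mem _ |>.mpr hq)
    (by rw [hJ, card_quotient_span_q])).symm

lemma sub_one_mem_span_q_iff {u : ↥(Rn 8)} (hu : ‖(u : ℂ)‖ = 1) :
    u - 1 ∈ I₈ ↔ u = 1 ∨ u = -1 := by
  obtain ⟨a, b, c, d, rfl⟩ := exists_ofCoords u
  have hsq := sq_add_sq_add_sq_add_sq_eq_one_of_norm_ofCoords hu
  have hone : (1 : ↥(Rn 8)) = ofCoords 1 0 0 0 := by simp [ofCoords]
  have hneg : (-1 : ↥(Rn 8)) = ofCoords (-1) 0 0 0 := by simp [ofCoords]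
  rw [show ofCoords a b c d - 1 = ofCoords (a - 1) b c d by simp only [ofCoords]; push_cast; ring,
    ofCoords_mem_span_q_iff, hneg, hone, ofCoords_inj, ofCoords_inj]
  have hbound : ∀ x : ℤ, x ^ 2 ≤ 1 → -1 ≤ x ∧ x ≤ 1 :=
    fun x hx => abs_le.mp ((sq_le_one_iff_abs_le_one x).mp hx)
  have := sq_nonneg a; have := sq_nonneg b; have := sq_nonneg c; have := sq_nonneg d
  obtain ⟨_, _⟩ := hbound a (by linarith)
  obtain ⟨_, _⟩ := hbound b (by linarith)
  obtain ⟨_, _⟩ := hbound c (by linarith)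
  obtain ⟨_, _⟩ := hbound d (by linarith)
  interval_cases a <;> interval_cases b <;> interval_cases c <;> interval_cases d <;> omega

lemma inIdeal_coe_ofCoords_iff {a b c d : ℤ} :
    InIdeal 8 I₈ (ofCoords a b c d) ↔ 2 ∣ b - a ∧ 2 ∣ c - b ∧ 2 ∣ d - c :=
  inIdeal_coe_iff.trans ofCoords_mem_span_q_iff

lemma forall_inIdeal_apply_sub_iff {g : ℂ → ℂ} (hg : IsIsometry g)
    (hR : g '' (Rn 8 : Set ℂ) = Rn 8) :
    (∀ x ∈ (Rn 8 : Set ℂ), InIdeal 8 I₈ (g x - x)) ↔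
      ∃ t : ℂ, InIdeal 8 I₈ t ∧ ((∀ z, g z = z + t) ∨ (∀ z, g z = -z + t)) := by
  constructor
  · intro H
    obtain ⟨a, b, ha, -, habs, hform⟩ := hg.exists_coeffs_mem hR
    have hg0 : g 0 = b := by rcases hform with h | h <;> simp [h]
    have hg1 : g 1 = a + b := by rcases hform with h | h <;> simp [h]
    have hbI : InIdeal 8 I₈ b := by simpa [hg0] using H 0 (zero_mem _)
    have ha1 : a = 1 ∨ a = -1 := by
      have h1 := (H 1 (one_mem _)).sub hbI
      rw [hg1, show a + b - 1 - b = ((⟨a, ha⟩ - 1 : ↥(Rn 8)) : ℂ) by push_cast; ring] at h1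
      rcases (sub_one_mem_span_q_iff habs).mp (inIdeal_coe_iff.mp h1) with h | h
      exacts [.inl (congrArg Subtype.val h), .inr (congrArg Subtype.val h)]
    rcases hform with hform | hform
    · refine ⟨b, hbI, ?_⟩
      rcases ha1 with rfl | rfl
      exacts [.inl fun z => by simp [hform], .inr fun z => by simp [hform]]
    · -- a reflection moves `ζ` out of its colour class
      have hζ := (H (zeta 8) (zeta_mem_Rn 8)).sub hbI
      rw [hform, conj_zeta_eight] at hζ
      exfalso
      rcases ha1 with rfl | rfl
      · rw [show 1 * -zeta 8 ^ 3 + b - zeta 8 - b = ofCoords 0 (-1) 0 (-1) by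
          simp only [ofCoords]; push_cast [coe_zetaR]; ring, inIdeal_coe_ofCoords_iff] at hζ
        omega
      · rw [show -1 * -zeta 8 ^ 3 + b - zeta 8 - b = ofCoords 0 (-1) 0 1 by
          simp only [ofCoords]; push_cast [coe_zetaR]; ring, inIdeal_coe_ofCoords_iff] at hζ
        omega
  · rintro ⟨t, ht, hform | hform⟩ x hx
    · simpa [hform] using ht
    · have h2x : InIdeal 8 I₈ (x * ((2 : ↥(Rn 8)) : ℂ)) :=
        (inIdeal_coe_iff.mpr two_mem_span_q).mul_left hx
      rw [hform, show -x + t - x = t - x * ((2 : ↥(Rn 8)) : ℂ) by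
        rw [show ((2 : ↥(Rn 8)) : ℂ) = 2 by norm_cast]; ring]
      exact ht.sub h2x

/-- for `n = 8`, `q = 1 + ζ + ζ² + ζ³` and `I = qR`: (i) `card(R/I) = 8`;
(ii) `I` is the unique ideal of index `8`; (iii) `conj q ∈ I` and the colouring is
perfect; (iv) `2 ∈ I`; (v) `1 - ζ² ∉ I`; (vi) `ζ + ζ³ ∉ I`; consequently the colour
preserving isometries are exactly `z ↦ z + t` and `z ↦ -z + t` with `t ∈ I`, i.e.
`K = T_{(q)} ⋊ C₂`. -/
theorem stmt19 (q : ↥(Rn 8)) (hqdef : q = 1 + zetaR 8 + zetaR 8 ^ 2 + zetaR 8 ^ 3)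
    (I : Ideal ↥(Rn 8)) (hIdef : I = Ideal.span {q}) :
    Nat.card (↥(Rn 8) ⧸ I) = 8 ∧
    (∀ J : Ideal ↥(Rn 8), Nat.card (↥(Rn 8) ⧸ J) = 8 → J = I) ∧
    (InIdeal 8 I ((starRingEnd ℂ) (q : ℂ)) ∧ IsPerfectColouring 8 I) ∧
    (2 : ↥(Rn 8)) ∈ I ∧
    (1 - zetaR 8 ^ 2) ∉ I ∧
    (zetaR 8 + zetaR 8 ^ 3) ∉ I ∧
    (∀ g : ℂ → ℂ, IsIsometry g → g '' (Rn 8 : Set ℂ) = (Rn 8 : Set ℂ) →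
      ((∀ x ∈ (Rn 8 : Set ℂ), InIdeal 8 I (g x - x)) ↔
        ∃ t : ℂ, InIdeal 8 I t ∧
          ((∀ z : ℂ, g z = z + t) ∨ (∀ z : ℂ, g z = -z + t)))) := by
  subst hqdef hIdef
  exact ⟨card_quotient_span_q, fun J hJ => eq_span_q_of_card_quotient hJ,
    ⟨conj_q_inIdeal, isPerfectColouring_of_conj (conj_inIdeal_of_span_singleton conj_q_inIdeal)⟩,
    two_mem_span_q, one_sub_zeta_sq_not_mem_span_q, zeta_add_zeta_cube_not_mem_span_q,
    fun g hg hgR => forall_inIdeal_apply_sub_iff hg hgR⟩
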